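/- arXiv:2311.00360 — 2 statements merged into one kernel-verified Lean document; each statement's English description precedes it below -/
import Mathlib

section
/- There exists r₀ such that for all integers r ≥ r₀ and all real t with 1 ≤ t + 1 ≤ r^{1/3}/100, with u = (r/3 − (t+1)r^{2/3}, r/3 + (t+1)r^{2/3}), v = (2r/3 − (t+1)r^{2/3}, 2r/3 + (t+1)r^{2/3}) and 𝐫 = (r,r), one has f(𝐨,u) + f(v,𝐫) ≥ 8r/3 − 7(t+1)² r^{1/3}. -/
namespace LPP

/-- `f(u,v) = (√(v₁-u₁) + √(v₂-u₂))²` if `u ⪯ v`, and `0` otherwise. -/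
noncomputable def fexp (u v : ℝ × ℝ) : ℝ :=
  if u.1 ≤ v.1 ∧ u.2 ≤ v.2 then (Real.sqrt (v.1 - u.1) + Real.sqrt (v.2 - u.2)) ^ 2 else 0

set_option maxHeartbeats 1000000 in
/-- **Deterministic Taylor-expansion estimate for `f`.** There exists `r₀` such that for all
integers `r ≥ r₀` and reals `t` with `1 ≤ t+1 ≤ r^{1/3}/100`, with
`u = (r/3 - (t+1)r^{2/3}, r/3 + (t+1)r^{2/3})`, `v = (2r/3 - (t+1)r^{2/3}, 2r/3 + (t+1)r^{2/3})`
and `𝐫 = (r,r)`, one has `f(𝐨,u) + f(v,𝐫) ≥ 8r/3 - 7(t+1)² r^{1/3}`. -/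
theorem f_taylor_estimate :
    ∃ r₀ : ℝ, 0 < r₀ ∧ ∀ r : ℕ, r₀ ≤ (r : ℝ) → ∀ t : ℝ, 1 ≤ t + 1 →
      t + 1 ≤ (r : ℝ) ^ ((1 : ℝ) / 3) / 100 →
      fexp (0, 0)
          ((r : ℝ) / 3 - (t + 1) * (r : ℝ) ^ ((2 : ℝ) / 3),
           (r : ℝ) / 3 + (t + 1) * (r : ℝ) ^ ((2 : ℝ) / 3)) +
        fexp
          (2 * (r : ℝ) / 3 - (t + 1) * (r : ℝ) ^ ((2 : ℝ) / 3),
           2 * (r : ℝ) / 3 + (t + 1) * (r : ℝ) ^ ((2 : ℝ) / 3)) ((r : ℝ), (r : ℝ)) ≥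
      8 * (r : ℝ) / 3 - 7 * (t + 1) ^ 2 * (r : ℝ) ^ ((1 : ℝ) / 3) := by
  refine ⟨1, one_pos, ?_⟩
  intro r hr t ht1 ht2
  have hr0 : (0:ℝ) < r := lt_of_lt_of_le one_pos hr
  set c : ℝ := t + 1 with hcdef
  set x : ℝ := (r:ℝ) ^ ((1:ℝ)/3) with hxdef
  have hx1 : (1:ℝ) ≤ x := by
    calc (1:ℝ) = (1:ℝ) ^ ((1:ℝ)/3) := (Real.one_rpow _).symm
    _ ≤ (r:ℝ) ^ ((1:ℝ)/3) := Real.rpow_le_rpow zero_le_one hr (by norm_num)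
  have hx0 : (0:ℝ) < x := lt_of_lt_of_le one_pos hx1
  have hx3 : (r:ℝ) = x ^ 3 := by
    rw [hxdef, ← Real.rpow_natCast ((r:ℝ) ^ ((1:ℝ)/3)) 3, ← Real.rpow_mul hr0.le]
    norm_num
  have hx2 : (r:ℝ) ^ ((2:ℝ)/3) = x ^ 2 := by
    rw [hxdef, ← Real.rpow_natCast ((r:ℝ) ^ ((1:ℝ)/3)) 2, ← Real.rpow_mul hr0.le]
    norm_num
  have hc1 : 1 ≤ c := ht1
  have hcx : c ≤ x / 100 := ht2
  rw [hx2, hx3]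
  set A : ℝ := x^3/3 - c * x^2 with hAdef
  set B : ℝ := x^3/3 + c * x^2 with hBdef
  have hA : (0:ℝ) ≤ A := by rw [hAdef]; nlinarith
  have hB : (0:ℝ) ≤ B := by rw [hBdef]; nlinarith
  have e1 : fexp (0, 0) (x^3/3 - c * x^2, x^3/3 + c * x^2)
      = (Real.sqrt A + Real.sqrt B) ^ 2 := by
    rw [fexp, if_pos]
    · simp only [hAdef, hBdef]; norm_num
    · constructor
      · simpa [hAdef] using hA
      · simp only; nlinarith
  have e2 : fexp (2 * x^3 / 3 - c * x^2, 2 * x^3 / 3 + c * x^2) (x^3, x^3)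
      = (Real.sqrt B + Real.sqrt A) ^ 2 := by
    rw [fexp, if_pos]
    · simp only
      rw [show x^3 - (2 * x^3 / 3 - c * x^2) = B by rw [hBdef]; ring,
        show x^3 - (2 * x^3 / 3 + c * x^2) = A by rw [hAdef]; ring]
    · constructor
      · simp only; nlinarith
      · simp only; nlinarith
  rw [e1, e2]
  have hS2 : Real.sqrt A ^ 2 = A := Real.sq_sqrt hA
  have hT2 : Real.sqrt B ^ 2 = B := Real.sq_sqrt hB
  have hST : x^3/3 - (7/4) * c^2 * x ≤ Real.sqrt A * Real.sqrt B := by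
    rw [← Real.sqrt_mul hA]
    rcases le_or_gt (x^3/3 - (7/4) * c^2 * x) 0 with h | h
    · exact h.trans (Real.sqrt_nonneg _)
    · rw [show A * B = x^6/9 - c^2 * x^4 by rw [hAdef, hBdef]; ring]
      refine (Real.le_sqrt' h).mpr ?_
      have hc2 : c^2 ≤ x^2/10000 := by nlinarith
      have h4 : c^2 * x^2 * c^2 ≤ c^2 * x^2 * (x^2/10000) :=
        mul_le_mul_of_nonneg_left hc2 (by positivity)
      nlinarith [h4, sq_nonneg c, sq_nonneg x]
  have hexp : (Real.sqrt A + Real.sqrt B) ^ 2 + (Real.sqrt B + Real.sqrt A) ^ 2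
      = 2 * A + 2 * B + 4 * (Real.sqrt A * Real.sqrt B) := by
    calc (Real.sqrt A + Real.sqrt B) ^ 2 + (Real.sqrt B + Real.sqrt A) ^ 2
        = 2 * Real.sqrt A ^ 2 + 2 * Real.sqrt B ^ 2 + 4 * (Real.sqrt A * Real.sqrt B) := by ring
      _ = 2 * A + 2 * B + 4 * (Real.sqrt A * Real.sqrt B) := by rw [hS2, hT2]
  have hAB : A + B = 2 * x ^ 3 / 3 := by rw [hAdef, hBdef]; ring
  clear_value A B x c
  nlinarith [hST, hexp, hAB]

end LPP
end

section
/- There exist r₀, t₀ such that for all integers r ≥ r₀ and all real t with t₀ < t ≤ r^{1/3}/100 − 1, the following holds for every realization of the weights: if (i) T(𝐨,u) ≥ f(𝐨,u) − t r^{1/3}, (ii) T(v,𝐫) ≥ f(v,𝐫) − t r^{1/3}, and (iii) there exists an up-right path from u to v with passage time ≥ 4r/3 + 10 t² r^{1/3}, then T(𝐨,𝐫) ≥ 4r + 2 t² r^{1/3}. -/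
/-! Superadditivity gives `T(𝐨,𝐫) ≥ T(𝐨,u) + ℓ(γ) + T(v,𝐫)`. The points `u`, `v` sit at transversal
distance `A = (t+1) r^{2/3}` from the diagonal, and the expansion
`(√(b-A) + √(b+A))² ≥ 4b - A²/b - A⁴/b³` shows that `f(𝐨,u)` and `f(v,𝐫)` each fall short of
`4r/3` by only about `3 (t+1)² r^{1/3}`. The three hypotheses therefore give
`T(𝐨,𝐫) ≥ 4r - 4 + (10t² - 7(t+1)² - 2t) r^{1/3}`,
which exceeds `4r + 2t² r^{1/3}` once `t > 20`. -/

open MeasureTheory ProbabilityTheory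

namespace LPP

/-- A configuration of vertex weights on `ℤ²`. -/
abbrev Config := (ℤ × ℤ) → ℝ

/-- One up-right step on the lattice: exactly one coordinate increases by 1. -/
def UpStep (p q : ℤ × ℤ) : Prop := q = (p.1 + 1, p.2) ∨ q = (p.1, p.2 + 1)

/-- `γ` is an up-right path from `u` to `v`. -/
def IsUpRightPath (γ : List (ℤ × ℤ)) (u v : ℤ × ℤ) : Prop :=
  γ.head? = some u ∧ γ.getLast? = some v ∧ γ.Chain' UpStep

/-- Passage time of a path: the sum of the weights of its vertices except the terminal one. -/
noncomputable def pathTime (ω : Config) (γ : List (ℤ × ℤ)) : ℝ :=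
  (γ.dropLast.map ω).sum

/-- Last passage time from `u` to `v`: the maximal passage time over up-right paths. -/
noncomputable def lpt (ω : Config) (u v : ℤ × ℤ) : ℝ :=
  sSup (pathTime ω '' {γ | IsUpRightPath γ u v})

/-- `γ` is a geodesic from `u` to `v`: an up-right path attaining the last passage time. -/
def IsGeodesic (ω : Config) (γ : List (ℤ × ℤ)) (u v : ℤ × ℤ) : Prop :=
  IsUpRightPath γ u v ∧ pathTime ω γ = lpt ω u v

/-- The family `X` of vertex weights is an i.i.d. family of rate-1 exponential
random variables under the probability measure `P`. -/
def IsIIDExp {Ω : Type*} [MeasurableSpace Ω] (P : Measure Ω) (X : ℤ × ℤ → Ω → ℝ) : Prop :=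
  (∀ u, Measurable (X u)) ∧
    iIndepFun X P ∧
    ∀ u, P.map (X u) = expMeasure 1

/-- The function `f` evaluated at lattice points. -/
noncomputable def fZ (u v : ℤ × ℤ) : ℝ := fexp ((u.1 : ℝ), (u.2 : ℝ)) ((v.1 : ℝ), (v.2 : ℝ))

/-- The point `u = (r/3 - (t+1)r^{2/3}, r/3 + (t+1)r^{2/3})`, rounded to a lattice point. -/
noncomputable def uPt (r : ℕ) (t : ℝ) : ℤ × ℤ :=
  (⌊(r : ℝ) / 3 - (t + 1) * (r : ℝ) ^ ((2 : ℝ) / 3)⌋,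
   ⌊(r : ℝ) / 3 + (t + 1) * (r : ℝ) ^ ((2 : ℝ) / 3)⌋)

/-- The point `v = (2r/3 - (t+1)r^{2/3}, 2r/3 + (t+1)r^{2/3})`, rounded to a lattice point. -/
noncomputable def vPt (r : ℕ) (t : ℝ) : ℤ × ℤ :=
  (⌊2 * (r : ℝ) / 3 - (t + 1) * (r : ℝ) ^ ((2 : ℝ) / 3)⌋,
   ⌊2 * (r : ℝ) / 3 + (t + 1) * (r : ℝ) ^ ((2 : ℝ) / 3)⌋)



lemma UpStep.lt {p q : ℤ × ℤ} (h : UpStep p q) : p < q := by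
  rcases h with rfl | rfl <;> simp [Prod.lt_iff]

namespace IsUpRightPath

variable {γ : List (ℤ × ℤ)} {u v : ℤ × ℤ}

lemma pairwise_lt (h : IsUpRightPath γ u v) : γ.Pairwise (· < ·) :=
  List.isChain_iff_pairwise.1 (h.2.2.imp fun _ _ => UpStep.lt)

lemma mem_Icc (h : IsUpRightPath γ u v) {w : ℤ × ℤ} (hw : w ∈ γ) : w ∈ Finset.Icc u v := by
  have hp := h.pairwise_lt
  obtain ⟨l, rfl⟩ := List.head?_eq_some_iff.1 h.1
  obtain ⟨l', hl'⟩ := List.getLast?_eq_some_iff.1 h.2.1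
  refine Finset.mem_Icc.2 ⟨?_, ?_⟩
  · rcases List.mem_cons.1 hw with rfl | hw
    exacts [le_rfl, (List.rel_of_pairwise_cons hp hw).le]
  · rw [hl'] at hp hw
    rcases List.mem_append.1 hw with hw | hw
    · exact (List.pairwise_append.1 hp).2.2 w hw v (List.mem_singleton_self v) |>.le
    · exact (List.mem_singleton.1 hw).le

lemma le (h : IsUpRightPath γ u v) : u ≤ v := by
  obtain ⟨l, rfl⟩ := List.head?_eq_some_iff.1 h.1
  exact (Finset.mem_Icc.1 (h.mem_Icc List.mem_cons_self)).2

lemma cons {w : ℤ × ℤ} (h : IsUpRightPath γ w v) (hstep : UpStep u w) :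
    IsUpRightPath (u :: γ) u v := by
  obtain ⟨l, rfl⟩ := List.head?_eq_some_iff.1 h.1
  exact ⟨rfl, by simpa [List.getLast?_cons] using h.2.1, List.isChain_cons_cons.2 ⟨hstep, h.2.2⟩⟩

end IsUpRightPath

lemma exists_isUpRightPath {u v : ℤ × ℤ} (h : u ≤ v) : ∃ γ, IsUpRightPath γ u v := by
  obtain ⟨h₁, h₂⟩ := h
  obtain ⟨n, hn⟩ : ∃ n : ℕ, (v.1 - u.1) + (v.2 - u.2) = n :=
    ⟨_, (Int.toNat_of_nonneg (by omega)).symm⟩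
  induction n generalizing u with
  | zero =>
    obtain rfl : u = v := Prod.ext (by omega) (by omega)
    exact ⟨[u], rfl, rfl, List.isChain_singleton u⟩
  | succ n ih =>
    by_cases hlt : u.1 < v.1
    · obtain ⟨γ, hγ⟩ := ih (u := (u.1 + 1, u.2)) (by omega) h₂ (by push_cast at hn ⊢; omega)
      exact ⟨u :: γ, hγ.cons (Or.inl rfl)⟩
    · obtain ⟨γ, hγ⟩ := ih (u := (u.1, u.2 + 1)) h₁ (by omega) (by push_cast at hn ⊢; omega)
      exact ⟨u :: γ, hγ.cons (Or.inr rfl)⟩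

section PassageTime

variable {ω : Config}

lemma pathTime_le_sum_Icc (hω : ∀ w, 0 ≤ ω w) {γ : List (ℤ × ℤ)} {u v : ℤ × ℤ}
    (h : IsUpRightPath γ u v) : pathTime ω γ ≤ ∑ w ∈ Finset.Icc u v, ω w := by
  classical
  have hnd : γ.dropLast.Nodup := (List.dropLast_sublist γ).nodup h.pairwise_lt.nodup
  rw [pathTime, ← List.sum_toFinset ω hnd]
  refine Finset.sum_le_sum_of_subset_of_nonneg (fun w hw => ?_) fun w _ _ => hω w
  exact h.mem_Icc (List.dropLast_subset γ (List.mem_toFinset.1 hw))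

lemma pathTime_le_lpt (hω : ∀ w, 0 ≤ ω w) {γ : List (ℤ × ℤ)} {u v : ℤ × ℤ}
    (h : IsUpRightPath γ u v) : pathTime ω γ ≤ lpt ω u v :=
  le_csSup ⟨_, Set.forall_mem_image.2 fun _ => pathTime_le_sum_Icc hω⟩ ⟨γ, h, rfl⟩

lemma exists_isUpRightPath_pathTime_eq_add {γ₁ γ₂ : List (ℤ × ℤ)} {u m v : ℤ × ℤ}
    (h₁ : IsUpRightPath γ₁ u m) (h₂ : IsUpRightPath γ₂ m v) :
    ∃ γ, IsUpRightPath γ u v ∧ pathTime ω γ = pathTime ω γ₁ + pathTime ω γ₂ := by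
  obtain ⟨l, rfl⟩ := List.getLast?_eq_some_iff.1 h₁.2.1
  obtain ⟨δ, rfl⟩ := List.head?_eq_some_iff.1 h₂.1
  refine ⟨l ++ m :: δ, ⟨?_, ?_, ?_⟩, ?_⟩
  · simpa [List.head?_append] using h₁.1
  · simpa [List.getLast?_append_cons] using h₂.2.1
  · show List.IsChain _ _
    simpa using h₁.2.2.append_overlap (l₃ := δ) (l₂ := [m]) h₂.2.2 (List.cons_ne_nil m [])
  · simp [pathTime]

lemma lpt_add_lpt_le (hω : ∀ w, 0 ≤ ω w) {u m v : ℤ × ℤ} (h₁ : ∃ γ, IsUpRightPath γ u m)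
    (h₂ : ∃ γ, IsUpRightPath γ m v) : lpt ω u m + lpt ω m v ≤ lpt ω u v := by
  obtain ⟨γ₁, hγ₁⟩ := h₁
  obtain ⟨γ₂, hγ₂⟩ := h₂
  rw [← le_sub_iff_add_le']
  refine csSup_le ⟨_, γ₂, hγ₂, rfl⟩ ?_
  rintro _ ⟨δ₂, hδ₂, rfl⟩
  rw [le_sub_iff_add_le', ← le_sub_iff_add_le]
  refine csSup_le ⟨_, γ₁, hγ₁, rfl⟩ ?_
  rintro _ ⟨δ₁, hδ₁, rfl⟩
  obtain ⟨γ, hγ, hsum⟩ := exists_isUpRightPath_pathTime_eq_add (ω := ω) hδ₁ hδ₂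
  rw [le_sub_iff_add_le, ← hsum]
  exact pathTime_le_lpt hω hγ

lemma lpt_add_pathTime_add_lpt_le (hω : ∀ w, 0 ≤ ω w) {γ : List (ℤ × ℤ)} {p u v q : ℤ × ℤ}
    (hpu : p ≤ u) (hγ : IsUpRightPath γ u v) (hvq : v ≤ q) :
    lpt ω p u + pathTime ω γ + lpt ω v q ≤ lpt ω p q :=
  calc lpt ω p u + pathTime ω γ + lpt ω v q ≤ lpt ω p u + lpt ω u v + lpt ω v q := by
        gcongr; exact pathTime_le_lpt hω hγ
    _ ≤ lpt ω p v + lpt ω v q := by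
        gcongr; exact lpt_add_lpt_le hω (exists_isUpRightPath hpu) ⟨γ, hγ⟩
    _ ≤ lpt ω p q :=
        lpt_add_lpt_le hω (exists_isUpRightPath (hpu.trans hγ.le)) (exists_isUpRightPath hvq)

end PassageTime

lemma one_sub_half_sub_sq_half_le_sqrt_one_sub {s : ℝ} (hs₀ : 0 ≤ s) (hs₁ : s ≤ 1) :
    1 - s / 2 - s ^ 2 / 2 ≤ √(1 - s) :=
  -- `(1 - s) - (1 - s/2 - s²/2)² = s² (1 - s) (3 + s) / 4`
  (le_abs_self _).trans <| Real.abs_le_sqrt <| by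
    nlinarith [mul_nonneg (mul_nonneg (sq_nonneg s) (sub_nonneg.2 hs₁)) (by linarith : 0 ≤ 3 + s)]

lemma four_mul_sub_le_sq_sqrt_add_sqrt {A b x y : ℝ} (hA : 0 ≤ A) (hAb : A ≤ b)
    (hx : b - A ≤ x) (hy : b + A ≤ y) :
    4 * b - A ^ 2 / b - A ^ 4 / b ^ 3 ≤ (√x + √y) ^ 2 := by
  obtain rfl | hb := (hA.trans hAb).eq_or_lt
  · simp only [le_antisymm hAb hA]
    norm_num
    positivity
  set s := (A / b) ^ 2 with hs
  have hs₁ : s ≤ 1 := pow_le_one₀ (by positivity) ((div_le_one hb).2 hAb)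
  have hprod : √(b - A) * √(b + A) = b * √(1 - s) := by
    rw [← Real.sqrt_mul (by linarith), Real.sqrt_eq_iff_mul_self_eq (by nlinarith) (by positivity),
      mul_mul_mul_comm, Real.mul_self_sqrt (by linarith), hs]
    field_simp
    ring
  calc 4 * b - A ^ 2 / b - A ^ 4 / b ^ 3 = 2 * b + 2 * b * (1 - s / 2 - s ^ 2 / 2) := by
        rw [hs]
        field_simp
        ring
    _ ≤ 2 * b + 2 * b * √(1 - s) := by
        gcongr
        exact one_sub_half_sub_sq_half_le_sqrt_one_sub (by positivity) hs₁
    _ = (√(b - A) + √(b + A)) ^ 2 := by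
        linear_combination -2 * hprod - Real.sq_sqrt (by linarith : 0 ≤ b - A) -
          Real.sq_sqrt (by linarith : 0 ≤ b + A)
    _ ≤ (√x + √y) ^ 2 := by gcongr

lemma sq_div_add_pow_four_div_le {A b c : ℝ} (hc : 0 < c) (hA : 0 ≤ A) (hAc : 100 * A ≤ c)
    (hb : 3 * c ≤ 10 * b) : A ^ 2 / b + A ^ 4 / b ^ 3 ≤ 7 / 2 * (A ^ 2 / c) := by
  have hb₀ : 0 < b := by linarith
  have hAb : (A / b) ^ 2 ≤ 1 / 900 := by
    rw [div_pow, div_le_iff₀ (by positivity)]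
    nlinarith
  have hfirst : A ^ 2 / b ≤ 10 / 3 * (A ^ 2 / c) := by
    rw [div_le_iff₀ hb₀]
    field_simp
    nlinarith [sq_nonneg A]
  calc A ^ 2 / b + A ^ 4 / b ^ 3 = A ^ 2 / b * (1 + (A / b) ^ 2) := by
        field_simp
    _ ≤ 10 / 3 * (A ^ 2 / c) * (1 + 1 / 900) := by gcongr
    _ ≤ 7 / 2 * (A ^ 2 / c) := by nlinarith [div_nonneg (sq_nonneg A) hc.le]

lemma fZ_swap (p q : ℤ × ℤ) : fZ p.swap q.swap = fZ p q := by
  simp only [fZ, fexp, Prod.fst_swap, Prod.snd_swap, and_comm, add_comm]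

lemma le_fZ {p q : ℤ × ℤ} {A b c : ℝ} (hc : 0 < c) (hA : 0 ≤ A) (hAc : 100 * A ≤ c)
    (hb : 3 * c ≤ 10 * b) (h₁ : b - A ≤ q.1 - p.1) (h₂ : b + A ≤ q.2 - p.2) :
    4 * b - 7 / 2 * (A ^ 2 / c) ≤ fZ p q := by
  have hAb : A ≤ b := by linarith
  rw [fZ, fexp, if_pos ⟨by linarith, by linarith⟩]
  linarith [four_mul_sub_le_sq_sqrt_add_sqrt hA hAb h₁ h₂, sq_div_add_pow_four_div_le hc hA hAc hb]

section Scaling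

variable {x t : ℝ}

lemma rpow_one_third_pow_three (hx : 0 ≤ x) : (x ^ ((1 : ℝ) / 3)) ^ 3 = x := by
  rw [← Real.rpow_natCast, ← Real.rpow_mul hx]
  norm_num

lemma rpow_two_thirds_eq_sq (hx : 0 ≤ x) : x ^ ((2 : ℝ) / 3) = (x ^ ((1 : ℝ) / 3)) ^ 2 := by
  rw [← Real.rpow_natCast, ← Real.rpow_mul hx]
  norm_num

lemma hundred_mul_le_of_le_rpow (hx : 0 ≤ x) (htx : t ≤ x ^ ((1 : ℝ) / 3) / 100 - 1) :
    100 * ((t + 1) * x ^ ((2 : ℝ) / 3)) ≤ x := by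
  conv_rhs => rw [← rpow_one_third_pow_three hx]
  rw [rpow_two_thirds_eq_sq hx]
  have : 100 * (t + 1) ≤ x ^ ((1 : ℝ) / 3) := by linarith
  nlinarith [sq_nonneg (x ^ ((1 : ℝ) / 3))]

lemma sq_mul_rpow_two_thirds_div (hx : 0 ≤ x) :
    ((t + 1) * x ^ ((2 : ℝ) / 3)) ^ 2 / x = (t + 1) ^ 2 * x ^ ((1 : ℝ) / 3) := by
  obtain rfl | hx₀ := hx.eq_or_lt
  · simp
  rw [rpow_two_thirds_eq_sq hx, mul_pow, ← pow_mul,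
    show (x ^ ((1 : ℝ) / 3)) ^ (2 * 2) = x ^ ((1 : ℝ) / 3) * (x ^ ((1 : ℝ) / 3)) ^ 3 by ring,
    rpow_one_third_pow_three hx]
  field_simp

lemma thirty_le_of_le_rpow (hx : 0 ≤ x) (ht : 0 ≤ t) (htx : t ≤ x ^ ((1 : ℝ) / 3) / 100 - 1) :
    30 ≤ x := by
  have h : 100 ≤ x ^ ((1 : ℝ) / 3) := by linarith
  calc (30 : ℝ) ≤ 100 ^ 3 := by norm_num
    _ ≤ (x ^ ((1 : ℝ) / 3)) ^ 3 := by gcongr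
    _ = x := rpow_one_third_pow_three hx

end Scaling

section Endpoints

variable {r : ℕ} {t : ℝ}

lemma zero_le_uPt (ht : 0 ≤ t) (htr : t ≤ (r : ℝ) ^ ((1 : ℝ) / 3) / 100 - 1) :
    ((0 : ℤ), (0 : ℤ)) ≤ uPt r t := by
  have hA := hundred_mul_le_of_le_rpow r.cast_nonneg htr
  have hA₀ : 0 ≤ (t + 1) * (r : ℝ) ^ ((2 : ℝ) / 3) := by positivity
  exact Prod.mk_le_mk.2 ⟨Int.floor_nonneg.2 (by linarith), Int.floor_nonneg.2 (by linarith)⟩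

lemma vPt_le (ht : 0 ≤ t) (htr : t ≤ (r : ℝ) ^ ((1 : ℝ) / 3) / 100 - 1) :
    vPt r t ≤ ((r : ℤ), (r : ℤ)) := by
  have hA := hundred_mul_le_of_le_rpow r.cast_nonneg htr
  have hA₀ : 0 ≤ (t + 1) * (r : ℝ) ^ ((2 : ℝ) / 3) := by positivity
  exact Prod.mk_le_mk.2 ⟨Int.floor_le_iff.2 (by push_cast; linarith),
    Int.floor_le_iff.2 (by push_cast; linarith)⟩

lemma le_fZ_zero_uPt (ht : 0 ≤ t) (htr : t ≤ (r : ℝ) ^ ((1 : ℝ) / 3) / 100 - 1) :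
    4 * (r : ℝ) / 3 - 4 - 7 / 2 * ((t + 1) ^ 2 * (r : ℝ) ^ ((1 : ℝ) / 3)) ≤
      fZ (0, 0) (uPt r t) := by
  have hA := hundred_mul_le_of_le_rpow r.cast_nonneg htr
  have hr := thirty_le_of_le_rpow r.cast_nonneg ht htr
  rw [← sq_mul_rpow_two_thirds_div r.cast_nonneg]
  have := le_fZ (p := (0, 0)) (q := uPt r t) (b := r / 3 - 1) (c := r) (by linarith)
    (by positivity) hA (by linarith) ?_ ?_
  · linarith
  all_goals
    simp only [uPt, Int.cast_zero, sub_zero]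
    linarith [Int.sub_one_lt_floor ((r : ℝ) / 3 + (t + 1) * (r : ℝ) ^ ((2 : ℝ) / 3)),
      Int.sub_one_lt_floor ((r : ℝ) / 3 - (t + 1) * (r : ℝ) ^ ((2 : ℝ) / 3))]

lemma le_fZ_vPt (ht : 0 ≤ t) (htr : t ≤ (r : ℝ) ^ ((1 : ℝ) / 3) / 100 - 1) :
    4 * (r : ℝ) / 3 - 7 / 2 * ((t + 1) ^ 2 * (r : ℝ) ^ ((1 : ℝ) / 3)) ≤
      fZ (vPt r t) ((r : ℤ), (r : ℤ)) := by
  have hA := hundred_mul_le_of_le_rpow r.cast_nonneg htr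
  have hr := thirty_le_of_le_rpow r.cast_nonneg ht htr
  -- unlike `u - 𝐨`, the increment `𝐫 - v` has its larger coordinate first
  rw [← sq_mul_rpow_two_thirds_div r.cast_nonneg, ← fZ_swap]
  have := le_fZ (p := (vPt r t).swap) (q := ((r : ℤ), (r : ℤ)).swap) (b := r / 3) (c := r)
    (by linarith) (by positivity) hA (by linarith) ?_ ?_
  · linarith
  all_goals
    simp only [vPt, Prod.fst_swap, Prod.snd_swap, Int.cast_natCast]
    linarith [Int.floor_le (2 * (r : ℝ) / 3 + (t + 1) * (r : ℝ) ^ ((2 : ℝ) / 3)),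
      Int.floor_le (2 * (r : ℝ) / 3 - (t + 1) * (r : ℝ) ^ ((2 : ℝ) / 3))]

end Endpoints

/-- **Deterministic concatenation estimate.** For `r ≥ r₀` and `t₀ < t ≤ r^{1/3}/100 - 1`,
for every realization of the (nonnegative) weights: if `T(𝐨,u) ≥ f(𝐨,u) - t r^{1/3}`,
`T(v,𝐫) ≥ f(v,𝐫) - t r^{1/3}`, and some up-right path from `u` to `v` has passage time at
least `4r/3 + 10 t² r^{1/3}`, then `T(𝐨,𝐫) ≥ 4r + 2 t² r^{1/3}`. -/
theorem concatenation_estimate :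
    ∃ r₀ t₀ : ℝ, 0 < r₀ ∧ 0 < t₀ ∧
      ∀ r : ℕ, r₀ ≤ (r : ℝ) → ∀ t : ℝ, t₀ < t → t ≤ (r : ℝ) ^ ((1 : ℝ) / 3) / 100 - 1 →
        ∀ ω : Config, (∀ w, 0 ≤ ω w) →
          lpt ω (0, 0) (uPt r t) ≥ fZ (0, 0) (uPt r t) - t * (r : ℝ) ^ ((1 : ℝ) / 3) →
          lpt ω (vPt r t) ((r : ℤ), (r : ℤ)) ≥
            fZ (vPt r t) ((r : ℤ), (r : ℤ)) - t * (r : ℝ) ^ ((1 : ℝ) / 3) →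
          (∃ γ, IsUpRightPath γ (uPt r t) (vPt r t) ∧
            pathTime ω γ ≥ 4 * (r : ℝ) / 3 + 10 * t ^ 2 * (r : ℝ) ^ ((1 : ℝ) / 3)) →
          lpt ω (0, 0) ((r : ℤ), (r : ℤ)) ≥ 4 * (r : ℝ) + 2 * t ^ 2 * (r : ℝ) ^ ((1 : ℝ) / 3) := by
  refine ⟨1, 20, one_pos, by norm_num, fun r _ t ht htr ω hω hu hv ⟨γ, hγ, hγt⟩ => ?_⟩
  have ht₀ : 0 ≤ t := by linarith
  have hconcat := lpt_add_pathTime_add_lpt_le hω (zero_le_uPt ht₀ htr) hγ (vPt_le ht₀ htr)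
  have hfu := le_fZ_zero_uPt ht₀ htr
  have hfv := le_fZ_vPt ht₀ htr
  set R := (r : ℝ) ^ ((1 : ℝ) / 3)
  have hgain : 4 ≤ (8 * t ^ 2 - 7 * (t + 1) ^ 2 - 2 * t) * R := by
    have hpoly : 4 ≤ 8 * t ^ 2 - 7 * (t + 1) ^ 2 - 2 * t := by nlinarith
    have hR : 1 ≤ R := by linarith
    nlinarith
  linarith

end LPP
end
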